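/- arXiv:1102.5170 — 3 statements merged into one kernel-verified Lean document; each statement's English description precedes it below -/
import Mathlib

section
/- (Negativity contraction under non-deterministic operations.) For i = 1,…,N let T_i : V → V_i be linear cone-preserving maps (T_i(C) ⊆ C_i) w.r.t. proper cones C ⊆ V and C_i ⊆ V_i with bases B = C ∩ {v | ⟨e,v⟩ = 1} and B_i = C_i ∩ {v | ⟨e_i,v⟩ = 1}, satisfying Σ_{i=1}^N ⟨e_i, T_i(b)⟩ ≤ 1 for all b ∈ B. Let ρ ∈ V be such that p_i := ⟨e_i, T_i(ρ)⟩ ≥ 0 for all i. Then for any elements ρ_i ∈ V_i satisfying T_i(ρ) = p_i·ρ_i whenever p_i > 0: Σ_{i=1}^N p_i · N_{B_i}(ρ_i) ≤ N_B(ρ) · tanh(max_i Δ(T_i)/4), where tanh(∞/4) := 1. -/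
/-!
Fix a decomposition `ρ = c₊ - c₋` with `c₊, c₋ ∈ C`; then `T_i ρ = T_i c₊ - T_i c₋` is a
difference of two elements of `C_i` at Hilbert distance at most `Δ(T_i)`. For `a, b` in a cone
with `⟨e, b⟩ ≤ ⟨e, a⟩`, `M b - a ∈ C` and `M' a - b ∈ C`, the identity
`a - b = s (M' a - b) - t (M b - a)` with `s, t ≥ 0` bounds `N(a - b)` by
`⟨e, b⟩ (M - 1)(M' - 1)/(M M' - 1)`, which by AM-GM is at most `⟨e, b⟩ tanh(log (M M') / 4)`.
Summing over `i`, the trace condition gives `∑ ⟨e_i, T_i c₋⟩ ≤ ⟨e, c₋⟩`, and taking the infimum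
over decompositions yields `N_B(ρ)`.
-/

noncomputable section

variable {V : Type*} [NormedAddCommGroup V] [InnerProductSpace ℝ V]

/-- A proper cone: closed, convex, closed under nonnegative scaling, pointed and solid. -/
def IsProperCone (C : Set V) : Prop :=
  IsClosed C ∧ Convex ℝ C ∧ (∀ (r : ℝ), 0 ≤ r → ∀ x ∈ C, r • x ∈ C) ∧
    (C ∩ (-C) = {0}) ∧ (Submodule.span ℝ C = ⊤)

/-- `sup_C(a/b) := inf {λ : ℝ | λ • b - a ∈ C}`, as an extended real (`⊤` if no such `λ`). -/
def supRatio (C : Set V) (a b : V) : EReal :=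
  sInf ((fun l : ℝ => (l : EReal)) '' {l : ℝ | l • b - a ∈ C})

/-- `inf_C(a/b) := sup {λ : ℝ | a - λ • b ∈ C}`. -/
def infRatio (C : Set V) (a b : V) : EReal :=
  sSup ((fun l : ℝ => (l : EReal)) '' {l : ℝ | a - l • b ∈ C})

/-- Hilbert's projective metric `h_C(a,b) = ln (sup_C(a/b) * sup_C(b/a)) ∈ [0,∞]`. -/
def hilbertDist (C : Set V) (a b : V) : EReal :=
  if supRatio C a b = ⊤ ∨ supRatio C b a = ⊤ then ⊤
  else ((Real.log ((supRatio C a b).toReal * (supRatio C b a).toReal) : ℝ) : EReal)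

/-- The oscillation `osc_C(a/b) = sup_C(a/b) - inf_C(a/b)`. -/
def oscRatio (C : Set V) (a b : V) : EReal :=
  supRatio C a b - infRatio C a b

variable {V' : Type*} [NormedAddCommGroup V'] [InnerProductSpace ℝ V']

/-- The projective diameter `Δ(T)` of a cone-preserving linear map `T`. -/
def projDiam (C : Set V) (C' : Set V') (T : V →ₗ[ℝ] V') : EReal :=
  ⨆ (a : V) (_ : a ∈ C \ {0}) (b : V) (_ : b ∈ C \ {0}), hilbertDist C' (T a) (T b)

/-- `tanh(x/4)`, with the convention `tanh(⊤/4) = 1`. -/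
def tanhQuarter (x : EReal) : ℝ :=
  if x = ⊤ then 1 else Real.tanh (x.toReal / 4)

/-- `tanh(x/2)`, with the convention `tanh(⊤/2) = 1`. -/
def tanhHalf (x : EReal) : ℝ :=
  if x = ⊤ then 1 else Real.tanh (x.toReal / 2)

/-- The dual cone of `C` (identifying `V` with its dual via the inner product). -/
def dualConeSet (C : Set V) : Set V := {w : V | ∀ c ∈ C, 0 ≤ (inner ℝ w c : ℝ)}

/-- The base norm `‖v‖_B` induced by the cone `C` and the functional `⟨e, ·⟩`. -/
def baseNorm (C : Set V) (e : V) (v : V) : ℝ :=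
  sInf {r : ℝ | ∃ cp ∈ C, ∃ cm ∈ C, v = cp - cm ∧ r = (inner ℝ e cp : ℝ) + (inner ℝ e cm : ℝ)}

/-- The negativity `N_B(v)` induced by the cone `C` and the functional `⟨e, ·⟩`. -/
def negativity (C : Set V) (e : V) (v : V) : ℝ :=
  sInf {r : ℝ | ∃ cp ∈ C, ∃ cm ∈ C, v = cp - cm ∧ r = (inner ℝ e cm : ℝ)}

open Real
open scoped RealInnerProductSpace

namespace IsProperCone

variable {C : Set V}

theorem zero_mem (hC : IsProperCone C) : (0 : V) ∈ C :=
  (hC.2.2.2.1.ge rfl).1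

theorem smul_mem (hC : IsProperCone C) {r : ℝ} (hr : 0 ≤ r) {x : V} (hx : x ∈ C) : r • x ∈ C :=
  hC.2.2.1 r hr x hx

theorem add_mem (hC : IsProperCone C) {x y : V} (hx : x ∈ C) (hy : y ∈ C) : x + y ∈ C := by
  have hmid := hC.2.1 hx hy (by norm_num : (0 : ℝ) ≤ 1 / 2) (by norm_num : (0 : ℝ) ≤ 1 / 2)
    (by norm_num)
  convert hC.smul_mem (by norm_num : (0 : ℝ) ≤ 2) hmid using 1
  module

theorem eq_zero_of_neg_mem (hC : IsProperCone C) {x : V} (hx : x ∈ C) (hx' : -x ∈ C) :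
    x = 0 :=
  hC.2.2.2.1.le ⟨hx, by simpa using hx'⟩

theorem nonneg_of_smul_mem (hC : IsProperCone C) {x : V} (hx : x ∈ C) (hx0 : x ≠ 0) {r : ℝ}
    (hr : r • x ∈ C) : 0 ≤ r := by
  by_contra! hneg
  refine hx0 (hC.eq_zero_of_neg_mem hx ?_)
  convert hC.smul_mem (neg_nonneg.2 (inv_lt_zero.2 hneg).le) hr using 1
  rw [smul_smul, neg_mul, inv_mul_cancel₀ hneg.ne, neg_one_smul]

theorem exists_eq_sub (hC : IsProperCone C) (v : V) : ∃ cp ∈ C, ∃ cm ∈ C, v = cp - cm := by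
  have hv : v ∈ Submodule.span ℝ C := hC.2.2.2.2 ▸ Submodule.mem_top
  induction hv using Submodule.span_induction with
  | mem c hc => exact ⟨c, hc, 0, hC.zero_mem, (sub_zero c).symm⟩
  | zero => exact ⟨0, hC.zero_mem, 0, hC.zero_mem, (sub_zero 0).symm⟩
  | add x y _ _ hx hy =>
    obtain ⟨a, ha, b, hb, rfl⟩ := hx
    obtain ⟨c, hc, d, hd, rfl⟩ := hy
    exact ⟨a + c, hC.add_mem ha hc, b + d, hC.add_mem hb hd, by abel⟩
  | smul r x _ hx =>
    obtain ⟨a, ha, b, hb, rfl⟩ := hx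
    rcases le_total 0 r with hr | hr
    · exact ⟨r • a, hC.smul_mem hr ha, r • b, hC.smul_mem hr hb, smul_sub r a b⟩
    · exact ⟨(-r) • b, hC.smul_mem (neg_nonneg.2 hr) hb, (-r) • a,
        hC.smul_mem (neg_nonneg.2 hr) ha, by module⟩

end IsProperCone

theorem inner_pos_of_mem_interior_dualConeSet {C : Set V} {e c : V}
    (he : e ∈ interior (dualConeSet C)) (hc : c ∈ C) (hc0 : c ≠ 0) : 0 < ⟪e, c⟫ := by
  have hlim : Filter.Tendsto (fun t : ℝ => e - t • c) (nhdsWithin 0 (Set.Ioi 0)) (nhds e) := by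
    have hcont : Continuous (fun t : ℝ => e - t • c) := by fun_prop
    simpa using (hcont.tendsto 0).mono_left nhdsWithin_le_nhds
  obtain ⟨t, hdual, ht⟩ := ((hlim.eventually (isOpen_interior.mem_nhds he)).and
    self_mem_nhdsWithin).exists
  have hpair := interior_subset hdual c hc
  rw [inner_sub_left, real_inner_smul_left, real_inner_self_eq_norm_sq] at hpair
  have : 0 < t * ‖c‖ ^ 2 := mul_pos ht (by positivity)
  linarith

theorem iSup_eq_bot_or_le {α : Type*} [CompleteLattice α] {ι : Sort*} {f : ι → α} {a : α}
    (hf : ∀ i, f i = ⊥ ∨ a ≤ f i) : ⨆ i, f i = ⊥ ∨ a ≤ ⨆ i, f i := by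
  by_cases h : ∃ i, a ≤ f i
  · obtain ⟨i, hi⟩ := h
    exact .inr (hi.trans (le_iSup f i))
  · exact .inl (iSup_eq_bot.2 fun i => (hf i).resolve_right fun hi => h ⟨i, hi⟩)

namespace Real

theorem tanh_le_tanh {x y : ℝ} (h : x ≤ y) : tanh x ≤ tanh y := by
  rwa [← artanh_le_artanh_iff ⟨neg_one_lt_tanh x, tanh_lt_one x⟩
    ⟨neg_one_lt_tanh y, tanh_lt_one y⟩, artanh_tanh, artanh_tanh]

theorem tanh_nonneg {x : ℝ} (hx : 0 ≤ x) : 0 ≤ tanh x :=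
  tanh_zero ▸ tanh_le_tanh hx

theorem tanh_log_div_four {u : ℝ} (hu : 0 < u) : tanh (log u / 4) = (√u - 1) / (√u + 1) := by
  set s := exp (log u / 4) with hs
  have hs0 : 0 < s := exp_pos _
  have hs4 : s ^ 4 = u := by
    rw [hs, ← exp_nat_mul, Nat.cast_ofNat, mul_div_cancel₀ _ four_ne_zero, exp_log hu]
  have hsqrt : √u = s ^ 2 := by
    rw [← hs4, show s ^ 4 = (s ^ 2) ^ 2 by ring, sqrt_sq (by positivity)]
  rw [tanh_eq, exp_neg, ← hs, hsqrt]
  field_simp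

theorem sub_one_mul_sub_one_div_le_tanh {M M' : ℝ} (hM : 1 ≤ M) (hM' : 1 ≤ M') :
    (M - 1) * (M' - 1) / (M * M' - 1) ≤ tanh (log (M * M') / 4) := by
  have hMM' : 0 < M * M' := by positivity
  rw [tanh_log_div_four hMM']
  set r := √(M * M')
  have hr2 : r ^ 2 = M * M' := sq_sqrt hMM'.le
  have hr1 : 1 ≤ r := one_le_sqrt.2 (one_le_mul_of_one_le_of_one_le hM hM')
  rcases hr1.eq_or_lt with hr | hr
  · have hD : M * M' - 1 = 0 := by rw [← hr2, ← hr]; norm_num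
    rw [hD, div_zero, ← hr]
    norm_num
  have hamgm : 2 * r ≤ M + M' := by nlinarith [sq_nonneg (M - M')]
  rw [div_le_div_iff₀ (by nlinarith) (by linarith)]
  nlinarith [mul_le_mul_of_nonneg_right hamgm (by linarith : (0 : ℝ) ≤ r + 1)]

end Real

theorem tanhQuarter_coe (x : ℝ) : tanhQuarter x = tanh (x / 4) := by
  simp [tanhQuarter]

theorem tanh_div_four_le_tanhQuarter {y : ℝ} {x : EReal} (h : (y : EReal) ≤ x) :
    tanh (y / 4) ≤ tanhQuarter x := by
  induction x using EReal.rec with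
  | bot => simp at h
  | coe x =>
    rw [tanhQuarter_coe]
    exact tanh_le_tanh (by gcongr; exact_mod_cast h)
  | top => simp [tanhQuarter, (tanh_lt_one _).le]

theorem tanhQuarter_nonneg {x : EReal} (hx : x = ⊥ ∨ 0 ≤ x) : 0 ≤ tanhQuarter x := by
  rcases hx with rfl | hx
  · simp [tanhQuarter]
  · simpa using tanh_div_four_le_tanhQuarter (y := 0) hx

section Negativity

variable {C : Set V} {e : V}

theorem negativity_le_inner (he : e ∈ dualConeSet C) {v cp cm : V} (hcp : cp ∈ C)
    (hcm : cm ∈ C) (hv : v = cp - cm) : negativity C e v ≤ ⟪e, cm⟫ :=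
  csInf_le ⟨0, by rintro _ ⟨_, _, cm', hcm', _, rfl⟩; exact he cm' hcm'⟩
    ⟨cp, hcp, cm, hcm, hv, rfl⟩

theorem le_negativity (hC : IsProperCone C) {v : V} {r : ℝ}
    (h : ∀ cp ∈ C, ∀ cm ∈ C, v = cp - cm → r ≤ ⟪e, cm⟫) : r ≤ negativity C e v := by
  obtain ⟨cp, hcp, cm, hcm, hv⟩ := hC.exists_eq_sub v
  refine le_csInf ⟨_, cp, hcp, cm, hcm, hv, rfl⟩ ?_
  rintro _ ⟨cp, hcp, cm, hcm, hv, rfl⟩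
  exact h cp hcp cm hcm hv

theorem le_negativity_mul (hC : IsProperCone C) {v : V} {r t : ℝ} (ht : 0 ≤ t)
    (h : ∀ cp ∈ C, ∀ cm ∈ C, v = cp - cm → r ≤ ⟪e, cm⟫ * t) : r ≤ negativity C e v * t := by
  rcases ht.eq_or_lt with rfl | ht
  · obtain ⟨cp, hcp, cm, hcm, hv⟩ := hC.exists_eq_sub v
    simpa using h cp hcp cm hcm hv
  · rw [← div_le_iff₀ ht]
    exact le_negativity hC fun cp hcp cm hcm hv => (div_le_iff₀ ht).2 (h cp hcp cm hcm hv)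

theorem mul_negativity_le_negativity_smul (hC : IsProperCone C) (he : e ∈ dualConeSet C)
    {p : ℝ} (hp : 0 < p) (v : V) : p * negativity C e v ≤ negativity C e (p • v) := by
  refine le_negativity hC fun cp hcp cm hcm hv => ?_
  have hv' : v = p⁻¹ • cp - p⁻¹ • cm := by rw [← smul_sub, ← hv, inv_smul_smul₀ hp.ne']
  have hle := negativity_le_inner he (hC.smul_mem (inv_nonneg.2 hp.le) hcp)
    (hC.smul_mem (inv_nonneg.2 hp.le) hcm) hv'
  rwa [real_inner_smul_right, ← div_eq_inv_mul, le_div_iff₀' hp] at hle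

theorem apply_le_inner_of_le_one_on_base (hC : IsProperCone C)
    (he : e ∈ interior (dualConeSet C)) (φ : V →ₗ[ℝ] ℝ)
    (hφ : ∀ b ∈ C ∩ {v | ⟪e, v⟫ = 1}, φ b ≤ 1) {c : V} (hc : c ∈ C) : φ c ≤ ⟪e, c⟫ := by
  rcases eq_or_ne c 0 with rfl | hc0
  · simp
  have hpos := inner_pos_of_mem_interior_dualConeSet he hc hc0
  have hbase : ⟪e, c⟫⁻¹ • c ∈ C ∩ {v | ⟪e, v⟫ = 1} :=
    ⟨hC.smul_mem (inv_nonneg.2 hpos.le) hc, by simp [real_inner_smul_right, hpos.ne']⟩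
  have hle := hφ _ hbase
  rwa [map_smul, smul_eq_mul, inv_mul_le_iff₀ hpos, mul_one] at hle

end Negativity

section Hilbert

variable {C : Set V} {a b : V}

theorem supRatio_eq_coe (hC : IsProperCone C) (ha : a ∈ C) (hb : b ∈ C) (ha0 : a ≠ 0)
    (h : supRatio C a b ≠ ⊤) : ∃ M : ℝ, supRatio C a b = M ∧ M • b - a ∈ C := by
  set S := {l : ℝ | l • b - a ∈ C}
  have hne : S.Nonempty := by
    rw [Set.nonempty_iff_ne_empty]
    rintro hS
    exact h (by simp [supRatio, S, hS])
  have hbdd : BddBelow S := by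
    refine ⟨0, fun l hl => ?_⟩
    by_contra! hl0
    refine ha0 (hC.eq_zero_of_neg_mem ha ?_)
    convert hC.add_mem hl (hC.smul_mem (neg_nonneg.2 hl0.le) hb) using 1
    module
  have hmem : sInf S ∈ S :=
    (hC.1.preimage (by fun_prop : Continuous fun l : ℝ => l • b - a)).csInf_mem hne hbdd
  exact ⟨sInf S, (EReal.coe_strictMono.monotone.map_isLeast
    ⟨hmem, fun l hl => csInf_le hbdd hl⟩).isGLB.sInf_eq, hmem⟩

theorem supRatio_zero_right (hC : IsProperCone C) (ha : a ∈ C) (ha0 : a ≠ 0) :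
    supRatio C a 0 = ⊤ := by
  have hS : {l : ℝ | l • (0 : V) - a ∈ C} = ∅ :=
    Set.eq_empty_of_forall_notMem fun l hl =>
      ha0 (hC.eq_zero_of_neg_mem ha (by simpa using hl))
  rw [supRatio, hS, Set.image_empty]
  exact sInf_empty

theorem supRatio_zero_zero (hC : IsProperCone C) : supRatio C 0 0 = ⊥ := by
  refine (EReal.eq_bot_iff_forall_lt _).2 fun y => ?_
  have hmem : ((y - 1 : ℝ) : EReal) ∈
      (fun l : ℝ => (l : EReal)) '' {l : ℝ | l • (0 : V) - 0 ∈ C} :=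
    ⟨y - 1, by simp [hC.zero_mem], rfl⟩
  exact (sInf_le hmem).trans_lt (by exact_mod_cast sub_one_lt y)

theorem one_le_mul_of_smul_sub_mem (hC : IsProperCone C) (ha : a ∈ C) (hb : b ∈ C)
    (hb0 : b ≠ 0) {M M' : ℝ} (hM : M • b - a ∈ C) (hM' : M' • a - b ∈ C) : 1 ≤ M * M' := by
  have hM'0 : 0 ≤ M' := by
    by_contra! hneg
    have hmem : (-1 : ℝ) • b ∈ C := by
      convert hC.add_mem hM' (hC.smul_mem (neg_nonneg.2 hneg.le) ha) using 1
      module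
    linarith [hC.nonneg_of_smul_mem hb hb0 hmem]
  have hmem : (M * M' - 1) • b ∈ C := by
    convert hC.add_mem (hC.smul_mem hM'0 hM) hM' using 1
    module
  linarith [hC.nonneg_of_smul_mem hb hb0 hmem]

theorem hilbertDist_eq_top_or_eq_log (hC : IsProperCone C) (ha : a ∈ C) (hb : b ∈ C)
    (ha0 : a ≠ 0) (hb0 : b ≠ 0) :
    hilbertDist C a b = ⊤ ∨ ∃ M M' : ℝ, M • b - a ∈ C ∧ M' • a - b ∈ C ∧
      hilbertDist C a b = (log (M * M') : ℝ) := by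
  by_cases htop : supRatio C a b = ⊤ ∨ supRatio C b a = ⊤
  · exact .inl (if_pos htop)
  rw [not_or] at htop
  obtain ⟨M, hMeq, hM⟩ := supRatio_eq_coe hC ha hb ha0 htop.1
  obtain ⟨M', hM'eq, hM'⟩ := supRatio_eq_coe hC hb ha hb0 htop.2
  refine .inr ⟨M, M', hM, hM', ?_⟩
  rw [hilbertDist, if_neg (by simp [hMeq, hM'eq]), hMeq, hM'eq, EReal.toReal_coe,
    EReal.toReal_coe]

theorem hilbertDist_nonneg (hC : IsProperCone C) (ha : a ∈ C) (hb : b ∈ C) :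
    0 ≤ hilbertDist C a b := by
  rcases eq_or_ne a 0 with rfl | ha0 <;> rcases eq_or_ne b 0 with rfl | hb0
  · simp [hilbertDist, supRatio_zero_zero hC]
  · simp [hilbertDist, supRatio_zero_right hC hb hb0]
  · simp [hilbertDist, supRatio_zero_right hC ha ha0]
  · rcases hilbertDist_eq_top_or_eq_log hC ha hb ha0 hb0 with h | ⟨M, M', hM, hM', h⟩
    · simp [h]
    · rw [h]
      exact EReal.coe_nonneg.2 (log_nonneg (one_le_mul_of_smul_sub_mem hC ha hb hb0 hM hM'))

theorem hilbertDist_le_projDiam {C' : Set V'} {T : V →ₗ[ℝ] V'} (ha : a ∈ C) (ha0 : a ≠ 0)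
    (hb : b ∈ C) (hb0 : b ≠ 0) : hilbertDist C' (T a) (T b) ≤ projDiam C C' T :=
  le_iSup₂_of_le a ⟨ha, ha0⟩ (le_iSup₂_of_le b ⟨hb, hb0⟩ le_rfl)

theorem projDiam_eq_bot_or_nonneg {C' : Set V'} (hC' : IsProperCone C') {T : V →ₗ[ℝ] V'}
    (hT : ∀ x ∈ C, T x ∈ C') : projDiam C C' T = ⊥ ∨ 0 ≤ projDiam C C' T :=
  iSup_eq_bot_or_le fun a => iSup_eq_bot_or_le fun ha => iSup_eq_bot_or_le fun b =>
    iSup_eq_bot_or_le fun hb => .inr (hilbertDist_nonneg hC' (hT a ha.1) (hT b hb.1))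

end Hilbert

section Contraction

variable {C : Set V} {e a b : V}

theorem negativity_sub_le_mul_tanh (hC : IsProperCone C) (he : e ∈ dualConeSet C) (ha : a ∈ C)
    (hβ : 0 < ⟪e, b⟫) (hab : ⟪e, b⟫ ≤ ⟪e, a⟫) {M M' : ℝ} (hM : M • b - a ∈ C)
    (hM' : M' • a - b ∈ C) (hMM' : 1 ≤ M * M') :
    negativity C e (a - b) ≤ ⟪e, b⟫ * tanh (log (M * M') / 4) := by
  have hMb : ⟪e, a⟫ ≤ M * ⟪e, b⟫ := by
    have := he _ hM
    rw [inner_sub_right, real_inner_smul_right] at this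
    linarith
  have hM1 : 1 ≤ M := le_of_mul_le_mul_right (by linarith) hβ
  rcases le_or_gt M' 1 with hM'1 | hM'1
  · have hsub : a - b ∈ C := by
      convert hC.add_mem hM' (hC.smul_mem (sub_nonneg.2 hM'1) ha) using 1
      module
    calc negativity C e (a - b) ≤ ⟪e, 0⟫ :=
          negativity_le_inner he hsub hC.zero_mem (sub_zero _).symm
      _ ≤ ⟪e, b⟫ * tanh (log (M * M') / 4) := by
        rw [inner_zero_right]
        exact mul_nonneg hβ.le (tanh_nonneg (div_nonneg (log_nonneg hMM') (by norm_num)))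
  · have hD : 0 < M * M' - 1 := by nlinarith
    set s := (M - 1) / (M * M' - 1)
    set t := (M' - 1) / (M * M' - 1)
    have ht : 0 ≤ t := div_nonneg (by linarith) hD.le
    have hdecomp : a - b = s • (M' • a - b) - t • (M • b - a) := by
      match_scalars <;> simp only [s, t] <;> field_simp <;> ring
    calc negativity C e (a - b) ≤ ⟪e, t • (M • b - a)⟫ :=
          negativity_le_inner he (hC.smul_mem (div_nonneg (by linarith) hD.le) hM')
            (hC.smul_mem ht hM) hdecomp
      _ = t * (M * ⟪e, b⟫ - ⟪e, a⟫) := by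
          rw [real_inner_smul_right, inner_sub_right, real_inner_smul_right]
      _ ≤ t * ((M - 1) * ⟪e, b⟫) := by gcongr; linarith
      _ = ⟪e, b⟫ * ((M - 1) * (M' - 1) / (M * M' - 1)) := by ring
      _ ≤ ⟪e, b⟫ * tanh (log (M * M') / 4) :=
          mul_le_mul_of_nonneg_left (sub_one_mul_sub_one_div_le_tanh hM1 hM'1.le) hβ.le

theorem negativity_sub_le_mul_tanhQuarter (hC : IsProperCone C)
    (he : e ∈ interior (dualConeSet C)) (ha : a ∈ C) (hb : b ∈ C) (hab : ⟪e, b⟫ ≤ ⟪e, a⟫)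
    {x : EReal} (hx : hilbertDist C a b ≤ x) :
    negativity C e (a - b) ≤ ⟪e, b⟫ * tanhQuarter x := by
  have hN := negativity_le_inner (interior_subset he) ha hb rfl
  rcases eq_or_ne b 0 with rfl | hb0
  · simpa using hN
  have hβ := inner_pos_of_mem_interior_dualConeSet he hb hb0
  have ha0 : a ≠ 0 := by
    rintro rfl
    rw [inner_zero_right] at hab
    linarith
  rcases hilbertDist_eq_top_or_eq_log hC ha hb ha0 hb0 with htop | ⟨M, M', hM, hM', hdist⟩
  · rw [htop, top_le_iff] at hx
    simpa [hx, tanhQuarter] using hN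
  · calc negativity C e (a - b) ≤ ⟪e, b⟫ * tanh (log (M * M') / 4) :=
          negativity_sub_le_mul_tanh hC (interior_subset he) ha hβ hab hM hM'
            (one_le_mul_of_smul_sub_mem hC ha hb hb0 hM hM')
      _ ≤ ⟪e, b⟫ * tanhQuarter x :=
          mul_le_mul_of_nonneg_left (tanh_div_four_le_tanhQuarter (hdist ▸ hx)) hβ.le

theorem negativity_map_sub_le_mul_tanhQuarter {C' : Set V'} {e' : V'} (hC' : IsProperCone C')
    (he' : e' ∈ interior (dualConeSet C')) {T : V →ₗ[ℝ] V'} (hT : ∀ x ∈ C, T x ∈ C')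
    (ha : a ∈ C) (hb : b ∈ C) (hab : ⟪e', T b⟫ ≤ ⟪e', T a⟫) {x : EReal}
    (hx : projDiam C C' T ≤ x) :
    negativity C' e' (T a - T b) ≤ ⟪e', T b⟫ * tanhQuarter x := by
  by_cases hab0 : a ≠ 0 ∧ b ≠ 0
  · exact negativity_sub_le_mul_tanhQuarter hC' he' (hT a ha) (hT b hb) hab
      ((hilbertDist_le_projDiam ha hab0.1 hb hab0.2).trans hx)
  have hβ : ⟪e', T b⟫ = 0 := by
    rcases not_and_or.1 hab0 with ha0 | hb0
    · rw [not_not.1 ha0, map_zero, inner_zero_right] at hab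
      exact le_antisymm hab (interior_subset he' _ (hT b hb))
    · rw [not_not.1 hb0, map_zero, inner_zero_right]
  simpa [hβ] using negativity_le_inner (interior_subset he') (hT a ha) (hT b hb) rfl

theorem mul_negativity_le_mul_tanhQuarter {C' : Set V'} {e' : V'} (hC' : IsProperCone C')
    (he' : e' ∈ interior (dualConeSet C')) {T : V →ₗ[ℝ] V'} (hT : ∀ x ∈ C, T x ∈ C')
    {cp cm : V} (hcp : cp ∈ C) (hcm : cm ∈ C) {p : ℝ} {σ : V'} (hp : p = ⟪e', T (cp - cm)⟫)
    (hp0 : 0 ≤ p) (hσ : 0 < p → T (cp - cm) = p • σ) {x : EReal} (hx : projDiam C C' T ≤ x)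
    (hx0 : 0 ≤ tanhQuarter x) : p * negativity C' e' σ ≤ ⟪e', T cm⟫ * tanhQuarter x := by
  rcases hp0.eq_or_lt with hp0 | hp0
  · rw [← hp0, zero_mul]
    exact mul_nonneg (interior_subset he' _ (hT cm hcm)) hx0
  have hab : ⟪e', T cm⟫ ≤ ⟪e', T cp⟫ := by
    rw [hp, map_sub, inner_sub_right] at hp0
    linarith
  calc p * negativity C' e' σ ≤ negativity C' e' (T (cp - cm)) :=
        hσ hp0 ▸ mul_negativity_le_negativity_smul hC' (interior_subset he') hp0 _
    _ = negativity C' e' (T cp - T cm) := by rw [map_sub]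
    _ ≤ ⟪e', T cm⟫ * tanhQuarter x :=
        negativity_map_sub_le_mul_tanhQuarter hC' he' hT hcp hcm hab hx

end Contraction

theorem negativity_contraction_nondeterministic_general
    {V : Type*} [NormedAddCommGroup V] [InnerProductSpace ℝ V]
    {N : ℕ} {W : Fin N → Type*}
    [∀ i, NormedAddCommGroup (W i)] [∀ i, InnerProductSpace ℝ (W i)]
    (C : Set V) (hC : IsProperCone C)
    (Ci : ∀ i, Set (W i)) (hCi : ∀ i, IsProperCone (Ci i))
    (e : V) (he : e ∈ interior (dualConeSet C))
    (ei : ∀ i, W i) (hei : ∀ i, ei i ∈ interior (dualConeSet (Ci i)))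
    (B : Set V) (hB : B = C ∩ {v : V | (inner ℝ e v : ℝ) = 1})
    (T : ∀ i, V →ₗ[ℝ] W i) (hT : ∀ i, ∀ x ∈ C, T i x ∈ Ci i)
    (hsum : ∀ b ∈ B, (∑ i, (inner ℝ (ei i) (T i b) : ℝ)) ≤ 1)
    (ρ : V) (p : Fin N → ℝ)
    (hp : ∀ i, p i = (inner ℝ (ei i) (T i ρ) : ℝ)) (hp0 : ∀ i, 0 ≤ p i)
    (ρi : ∀ i, W i) (hρi : ∀ i, 0 < p i → T i ρ = p i • ρi i) :
    (∑ i, p i * negativity (Ci i) (ei i) (ρi i))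
      ≤ negativity C e ρ * tanhQuarter (⨆ i, projDiam C (Ci i) (T i)) := by
  set S := ⨆ i, projDiam C (Ci i) (T i)
  have hS : 0 ≤ tanhQuarter S :=
    tanhQuarter_nonneg (iSup_eq_bot_or_le fun i => projDiam_eq_bot_or_nonneg (hCi i) (hT i))
  refine le_negativity_mul hC hS fun cp hcp cm hcm hρ => ?_
  subst hρ
  have htrace : ∑ i, ⟪ei i, T i cm⟫ ≤ ⟪e, cm⟫ := by
    simpa using apply_le_inner_of_le_one_on_base hC he
      (∑ i, (innerSL ℝ (ei i)).toLinearMap ∘ₗ T i) (by simpa [hB] using hsum) hcm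
  calc ∑ i, p i * negativity (Ci i) (ei i) (ρi i) ≤ ∑ i, ⟪ei i, T i cm⟫ * tanhQuarter S :=
        Finset.sum_le_sum fun i _ => mul_negativity_le_mul_tanhQuarter (hCi i) (hei i) (hT i)
          hcp hcm (hp i) (hp0 i) (hρi i) (le_iSup (fun j => projDiam C (Ci j) (T j)) i) hS
    _ = (∑ i, ⟪ei i, T i cm⟫) * tanhQuarter S := (Finset.sum_mul ..).symm
    _ ≤ ⟪e, cm⟫ * tanhQuarter S := mul_le_mul_of_nonneg_right htrace hS

/-- **Negativity contraction under non-deterministic operations.** -/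
theorem negativity_contraction_nondeterministic
    {V : Type*} [NormedAddCommGroup V] [InnerProductSpace ℝ V] [FiniteDimensional ℝ V]
    {N : ℕ} {W : Fin N → Type*}
    [∀ i, NormedAddCommGroup (W i)] [∀ i, InnerProductSpace ℝ (W i)]
    [∀ i, FiniteDimensional ℝ (W i)]
    (C : Set V) (hC : IsProperCone C)
    (Ci : ∀ i, Set (W i)) (hCi : ∀ i, IsProperCone (Ci i))
    (e : V) (he : e ∈ interior (dualConeSet C))
    (ei : ∀ i, W i) (hei : ∀ i, ei i ∈ interior (dualConeSet (Ci i)))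
    (B : Set V) (hB : B = C ∩ {v : V | (inner ℝ e v : ℝ) = 1})
    (Bi : ∀ i, Set (W i)) (hBi : ∀ i, Bi i = Ci i ∩ {v : W i | (inner ℝ (ei i) v : ℝ) = 1})
    (T : ∀ i, V →ₗ[ℝ] W i) (hT : ∀ i, ∀ x ∈ C, T i x ∈ Ci i)
    (hsum : ∀ b ∈ B, (∑ i, (inner ℝ (ei i) (T i b) : ℝ)) ≤ 1)
    (ρ : V) (p : Fin N → ℝ)
    (hp : ∀ i, p i = (inner ℝ (ei i) (T i ρ) : ℝ)) (hp0 : ∀ i, 0 ≤ p i)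
    (ρi : ∀ i, W i) (hρi : ∀ i, 0 < p i → T i ρ = p i • ρi i) :
    (∑ i, p i * negativity (Ci i) (ei i) (ρi i))
      ≤ negativity C e ρ * tanhQuarter (⨆ i, projDiam C (Ci i) (T i)) :=
  negativity_contraction_nondeterministic_general C hC Ci hCi e he ei hei B hB T hT hsum ρ p hp hp0
    ρi hρi
end
end

section
/- (Fidelity vs. Hilbert's projective metric.) Let ρ₁, ρ₂ be density matrices in M_d(ℂ). Then √(1 − F(ρ₁,ρ₂)²) ≤ tanh(h_{S₊}(ρ₁,ρ₂)/4), where F(ρ₁,ρ₂) := tr √(ρ₁^{1/2} ρ₂ ρ₁^{1/2}) is the fidelity and tanh(∞/4) := 1. -/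
/-!
Let `s = sup(ρ₁/ρ₂)` and `t = sup(ρ₂/ρ₁)`: both are attained because the Loewner cone is closed,
and both are `≥ 1` by comparing traces. Operator monotonicity of the square root turns
`ρ₁ ≤ s ρ₂` and `ρ₂ ≤ t ρ₁` into `A ≤ √s B` and `B ≤ √t A` for `A = √ρ₁`, `B = √ρ₂`. The trace of
the product of the positive matrices `√s B - A` and `√t A - B` is nonnegative, which reads
`√s + √t ≤ (1 + √(st)) Re tr (A B)`. As `Re tr (A B) ≤ ‖A B‖₁ = F(ρ₁,ρ₂)`, elementary algebra gives
`1 - F² ≤ ((√(st) - 1) / (√(st) + 1))² = tanh² (log (st) / 4)`.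
-/

open scoped ComplexOrder
open Matrix

noncomputable section

variable {n : Type*} [Fintype n] [DecidableEq n]

/-- `sup(A/B) := inf {λ : ℝ | A ≤ λ B}` w.r.t. the Loewner order (`⊤` if no such `λ` exists). -/
def msupRatio (A B : Matrix n n ℂ) : EReal :=
  sInf ((fun l : ℝ => (l : EReal)) '' {l : ℝ | (l • B - A).PosSemidef})

/-- `inf(A/B) := sup {λ : ℝ | λ B ≤ A}` w.r.t. the Loewner order. -/
def minfRatio (A B : Matrix n n ℂ) : EReal :=
  sSup ((fun l : ℝ => (l : EReal)) '' {l : ℝ | (A - l • B).PosSemidef})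

/-- Hilbert's projective metric `h_{S₊}(A,B) = ln (sup(A/B) · sup(B/A)) ∈ [0,∞]`
w.r.t. the positive semidefinite cone. -/
def mHilbert (A B : Matrix n n ℂ) : EReal :=
  if msupRatio A B = ⊤ ∨ msupRatio B A = ⊤ then ⊤
  else ((Real.log ((msupRatio A B).toReal * (msupRatio B A).toReal) : ℝ) : EReal)

open Classical in
/-- The positive semidefinite square root of a PSD matrix (junk value `0` otherwise). -/
def psdSqrt (A : Matrix n n ℂ) : Matrix n n ℂ :=
  if h : A.PosSemidef then
    (h.1.eigenvectorUnitary : Matrix n n ℂ) *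
      diagonal (((↑) : ℝ → ℂ) ∘ Real.sqrt ∘ h.1.eigenvalues) *
      (star h.1.eigenvectorUnitary : Matrix n n ℂ)
  else 0

/-- The fidelity `F(ρ₁,ρ₂) := tr √(ρ₁^{1/2} ρ₂ ρ₁^{1/2})`. -/
def fidelity (ρ₁ ρ₂ : Matrix n n ℂ) : ℝ :=
  ((psdSqrt (psdSqrt ρ₁ * ρ₂ * psdSqrt ρ₁)).trace).re

open scoped MatrixOrder Matrix.Norms.L2Operator

lemma Real.tanh_log_div_two {x : ℝ} (hx : 0 < x) : tanh (log x / 2) = (x - 1) / (x + 1) := by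
  have hw : exp (log x / 2) ^ 2 = x := by
    rw [← exp_nat_mul, Nat.cast_ofNat, mul_div_cancel₀ _ two_ne_zero, exp_log hx]
  rw [tanh_eq, exp_neg]
  conv_rhs => rw [← hw]
  field_simp

lemma sqrt_one_sub_sq_le_of_add_le_mul {a c F : ℝ} (ha : 0 ≤ a) (hc : 0 ≤ c) (hac : 1 ≤ a * c)
    (h : a + c ≤ (1 + a * c) * F) : √(1 - F ^ 2) ≤ (a * c - 1) / (a * c + 1) := by
  have hF : (a + c) ^ 2 ≤ ((1 + a * c) * F) ^ 2 := pow_le_pow_left₀ (by positivity) h 2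
  refine Real.sqrt_le_iff.2 ⟨div_nonneg (by linarith) (by linarith), ?_⟩
  rw [div_pow, le_div_iff₀ (by positivity)]
  nlinarith [sq_nonneg (a - c)]

lemma CFC.sqrt_smul {A : Type*} [CStarAlgebra A] [PartialOrder A] [StarOrderedRing A]
    {a : A} {s : ℝ} (hs : 0 ≤ s) (ha : 0 ≤ a) : CFC.sqrt (s • a) = √s • CFC.sqrt a := by
  refine CFC.sqrt_unique ?_ (smul_nonneg (Real.sqrt_nonneg s) (CFC.sqrt_nonneg a))
  rw [smul_mul_smul_comm, Real.mul_self_sqrt hs, CFC.sqrt_mul_sqrt_self a ha]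

namespace Matrix

lemma mul_conjTranspose_apply_self {m : Type*} [Fintype m] (N : Matrix m m ℂ) (i : m) :
    (N * Nᴴ) i i = ∑ j, (Complex.normSq (N i j) : ℂ) := by
  simp only [mul_apply, conjTranspose_apply, Complex.star_def, Complex.mul_conj]

lemma re_trace_le_of_mul_conjTranspose_eq_diagonal {N : Matrix n n ℂ} {p : n → ℝ}
    (hp : ∀ i, 0 ≤ p i) (hN : N * Nᴴ = diagonal fun i => (p i : ℂ) ^ 2) :
    N.trace.re ≤ ∑ i, p i := by
  rw [trace, Complex.re_sum]
  refine Finset.sum_le_sum fun i _ => (Complex.re_le_norm _).trans ?_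
  have hrow : ∑ j, Complex.normSq (N i j) = p i ^ 2 := by
    have := (mul_conjTranspose_apply_self N i).symm.trans (by rw [hN, diagonal_apply_eq])
    exact_mod_cast this
  rw [← pow_le_pow_iff_left₀ (norm_nonneg _) (hp i) two_ne_zero, ← Complex.normSq_eq_norm_sq,
    ← hrow]
  exact Finset.single_le_sum (fun j _ => Complex.normSq_nonneg (N i j)) (Finset.mem_univ i)

/-- `Re tr M ≤ ‖M‖₁`: in an eigenbasis of `√(M Mᴴ)` the rows of `M` have the eigenvalues as
lengths, so they dominate the diagonal entries. -/
lemma re_trace_le_re_trace_sqrt_mul_conjTranspose (M : Matrix n n ℂ) :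
    M.trace.re ≤ (CFC.sqrt (M * Mᴴ)).trace.re := by
  set P := CFC.sqrt (M * Mᴴ)
  have hP : P.PosSemidef := (CFC.sqrt_nonneg _).posSemidef
  set φ := Unitary.conjStarAlgAut ℂ (Matrix n n ℂ) (star hP.1.eigenvectorUnitary)
  have hφP : φ P = diagonal (RCLike.ofReal ∘ hP.1.eigenvalues) :=
    hP.1.conjStarAlgAut_star_eigenvectorUnitary
  have hφM : φ M * (φ M)ᴴ = diagonal fun i => (hP.1.eigenvalues i : ℂ) ^ 2 := by
    rw [← star_eq_conjTranspose, ← map_star, ← map_mul, star_eq_conjTranspose,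
      ← CFC.sqrt_mul_sqrt_self (M * Mᴴ) (posSemidef_self_mul_conjTranspose M).nonneg, map_mul,
      hφP, diagonal_mul_diagonal]
    simp [sq]
  calc M.trace.re = (φ M).trace.re := by
        rw [Unitary.conjStarAlgAut_apply, trace_mul_cycle, Unitary.coe_star_mul_self, one_mul]
    _ ≤ ∑ i, hP.1.eigenvalues i :=
        re_trace_le_of_mul_conjTranspose_eq_diagonal hP.eigenvalues_nonneg hφM
    _ = P.trace.re := by simp [hP.1.trace_eq_sum_eigenvalues]

lemma trace_mul_nonneg {X Y : Matrix n n ℂ} (hX : 0 ≤ X) (hY : 0 ≤ Y) : 0 ≤ (X * Y).trace := by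
  have hXY : (X * Y).trace = (star (CFC.sqrt X) * Y * CFC.sqrt X).trace := by
    rw [(CFC.sqrt_nonneg X).isSelfAdjoint.star_eq, trace_mul_cycle, CFC.sqrt_mul_sqrt_self X hX]
  rw [hXY]
  exact (star_left_conjugate_nonneg hY _).posSemidef.trace_nonneg

lemma add_le_re_trace_mul_of_le_smul {A B : Matrix n n ℂ} {a c : ℝ}
    (hA : A ≤ a • B) (hB : B ≤ c • A) :
    a * (B * B).trace.re + c * (A * A).trace.re ≤ (1 + a * c) * (A * B).trace.re := by
  have h := trace_mul_nonneg (sub_nonneg.2 hA) (sub_nonneg.2 hB)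
  have hexp : ((a • B - A) * (c • A - B)).trace =
      (a * c) • (A * B).trace - a • (B * B).trace - c • (A * A).trace + (A * B).trace := by
    rw [sub_mul, mul_sub, mul_sub, smul_mul_smul_comm, smul_mul_assoc, mul_smul_comm,
      trace_sub, trace_sub, trace_sub, trace_smul, trace_smul, trace_smul, trace_mul_comm B A]
    abel
  rw [hexp, Complex.nonneg_iff] at h
  simp only [Complex.add_re, Complex.sub_re, Complex.smul_re, smul_eq_mul] at h
  linarith [h.1]

lemma one_le_of_le_smul {m : Type*} [Fintype m] {A B : Matrix m m ℂ} {l : ℝ}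
    (tA : A.trace = 1) (tB : B.trace = 1) (h : A ≤ l • B) : 1 ≤ l := by
  have := (sub_nonneg.2 h).posSemidef.trace_nonneg
  rw [trace_sub, trace_smul, tA, tB, Complex.real_smul, mul_one, sub_nonneg] at this
  exact_mod_cast this

lemma isClosed_setOf_le_smul (A B : Matrix n n ℂ) : IsClosed {l : ℝ | A ≤ l • B} :=
  isClosed_le continuous_const (continuous_id.smul continuous_const)

end Matrix

lemma psdSqrt_eq_sqrt (A : Matrix n n ℂ) : psdSqrt A = CFC.sqrt A := by
  by_cases hA : A.PosSemidef
  · rw [CFC.sqrt_eq_real_sqrt A hA.nonneg, cfcₙ_eq_cfc, hA.1.cfc_eq, psdSqrt, dif_pos hA]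
    rfl
  · rw [psdSqrt, dif_neg hA, CFC.sqrt_of_not_nonneg (mt LE.le.posSemidef hA)]

lemma fidelity_eq (ρ₁ ρ₂ : Matrix n n ℂ) :
    fidelity ρ₁ ρ₂ = (CFC.sqrt (CFC.sqrt ρ₁ * ρ₂ * CFC.sqrt ρ₁)).trace.re := by
  simp only [fidelity, psdSqrt_eq_sqrt]

lemma re_trace_sqrt_mul_sqrt_le_fidelity (ρ₁ : Matrix n n ℂ) {ρ₂ : Matrix n n ℂ} (h₂ : 0 ≤ ρ₂) :
    (CFC.sqrt ρ₁ * CFC.sqrt ρ₂).trace.re ≤ fidelity ρ₁ ρ₂ := by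
  have hM : CFC.sqrt ρ₁ * ρ₂ * CFC.sqrt ρ₁ =
      CFC.sqrt ρ₁ * CFC.sqrt ρ₂ * (CFC.sqrt ρ₁ * CFC.sqrt ρ₂)ᴴ := by
    rw [conjTranspose_mul, ← star_eq_conjTranspose, ← star_eq_conjTranspose,
      (CFC.sqrt_nonneg ρ₁).isSelfAdjoint.star_eq, (CFC.sqrt_nonneg ρ₂).isSelfAdjoint.star_eq,
      mul_assoc _ (CFC.sqrt ρ₂), ← mul_assoc (CFC.sqrt ρ₂), CFC.sqrt_mul_sqrt_self ρ₂ h₂,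
      mul_assoc]
  rw [fidelity_eq, hM]
  exact re_trace_le_re_trace_sqrt_mul_conjTranspose _

lemma sqrt_one_sub_fidelity_sq_le_tanh {ρ₁ ρ₂ : Matrix n n ℂ} (h₁ : 0 ≤ ρ₁) (h₂ : 0 ≤ ρ₂)
    (t₁ : ρ₁.trace = 1) (t₂ : ρ₂.trace = 1) {s t : ℝ} (hs : ρ₁ ≤ s • ρ₂) (ht : ρ₂ ≤ t • ρ₁) :
    √(1 - fidelity ρ₁ ρ₂ ^ 2) ≤ Real.tanh (Real.log (s * t) / 4) := by
  have hs₁ : 1 ≤ s := one_le_of_le_smul t₁ t₂ hs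
  have ht₁ : 1 ≤ t := one_le_of_le_smul t₂ t₁ ht
  have hA : CFC.sqrt ρ₁ ≤ √s • CFC.sqrt ρ₂ :=
    (CFC.sqrt_le_sqrt _ _ hs).trans_eq (CFC.sqrt_smul (by linarith) h₂)
  have hB : CFC.sqrt ρ₂ ≤ √t • CFC.sqrt ρ₁ :=
    (CFC.sqrt_le_sqrt _ _ ht).trans_eq (CFC.sqrt_smul (by linarith) h₁)
  have hAB := add_le_re_trace_mul_of_le_smul hA hB
  rw [CFC.sqrt_mul_sqrt_self ρ₁ h₁, CFC.sqrt_mul_sqrt_self ρ₂ h₂, t₁, t₂, Complex.one_re,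
    mul_one, mul_one] at hAB
  have hst : 1 ≤ √s * √t :=
    one_le_mul_of_one_le_of_one_le (Real.one_le_sqrt.2 hs₁) (Real.one_le_sqrt.2 ht₁)
  have hlog : Real.log (s * t) / 4 = Real.log (√s * √t) / 2 := by
    rw [← Real.sqrt_mul (by linarith), Real.log_sqrt (by nlinarith)]
    ring
  rw [hlog, Real.tanh_log_div_two (by linarith)]
  refine sqrt_one_sub_sq_le_of_add_le_mul (Real.sqrt_nonneg s) (Real.sqrt_nonneg t) hst ?_
  exact hAB.trans (mul_le_mul_of_nonneg_left (re_trace_sqrt_mul_sqrt_le_fidelity ρ₁ h₂)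
    (by linarith))

lemma msupRatio_eq_of_isLeast {m : Type*} {A B : Matrix m m ℂ} {s : ℝ}
    (h : IsLeast {l : ℝ | A ≤ l • B} s) : msupRatio A B = s :=
  (EReal.coe_strictMono.monotone.map_isLeast h).isGLB.sInf_eq

lemma exists_msupRatio_eq {A B : Matrix n n ℂ} (tA : A.trace = 1) (tB : B.trace = 1)
    (h : msupRatio A B ≠ ⊤) : ∃ s : ℝ, A ≤ s • B ∧ msupRatio A B = s := by
  set S := {l : ℝ | A ≤ l • B}
  have hne : S.Nonempty := by
    refine Set.nonempty_iff_ne_empty.2 fun hS => h ?_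
    change sInf (_ '' S) = ⊤
    rw [hS, Set.image_empty, sInf_empty]
  have hbdd : BddBelow S := ⟨1, fun _ hl => one_le_of_le_smul tA tB hl⟩
  have hmin : IsLeast S (sInf S) :=
    ⟨(isClosed_setOf_le_smul A B).csInf_mem hne hbdd, fun _ hl => csInf_le hbdd hl⟩
  exact ⟨sInf S, hmin.1, msupRatio_eq_of_isLeast hmin⟩

/-- **Fidelity vs. Hilbert's projective metric.** -/
theorem fidelity_vs_hilbert_metric
    {d : ℕ} (ρ₁ ρ₂ : Matrix (Fin d) (Fin d) ℂ)
    (h₁ : ρ₁.PosSemidef) (h₂ : ρ₂.PosSemidef)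
    (t₁ : ρ₁.trace = 1) (t₂ : ρ₂.trace = 1) :
    Real.sqrt (1 - fidelity ρ₁ ρ₂ ^ 2) ≤ tanhQuarter (mHilbert ρ₁ ρ₂) := by
  by_cases htop : msupRatio ρ₁ ρ₂ = ⊤ ∨ msupRatio ρ₂ ρ₁ = ⊤
  · rw [mHilbert, if_pos htop, tanhQuarter, if_pos rfl, Real.sqrt_le_one]
    exact sub_le_self 1 (sq_nonneg _)
  · obtain ⟨s, hs, hs_eq⟩ := exists_msupRatio_eq t₁ t₂ (not_or.1 htop).1
    obtain ⟨t, ht, ht_eq⟩ := exists_msupRatio_eq t₂ t₁ (not_or.1 htop).2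
    rw [mHilbert, if_neg htop, hs_eq, ht_eq, tanhQuarter, if_neg (EReal.coe_ne_top _),
      EReal.toReal_coe, EReal.toReal_coe, EReal.toReal_coe]
    exact sqrt_one_sub_fidelity_sq_le_tanh h₁.nonneg h₂.nonneg t₁ t₂ hs ht

end
end

section
/- (Chernoff bound vs. Hilbert distance.) Let ρ₁, ρ₂ be density matrices in M_d(ℂ). Then the Chernoff bound ξ := −ln( inf_{0 ≤ s ≤ 1} tr(ρ₁^s ρ₂^{1−s}) ) satisfies ξ ≤ h_{S₊}(ρ₁,ρ₂)/2 (the inequality being trivial when h_{S₊}(ρ₁,ρ₂) = ∞). -/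
open scoped ComplexOrder
open Matrix

noncomputable section

variable {n : Type*} [Fintype n] [DecidableEq n]

open Classical in
/-- The matrix power `A^s` of a Hermitian matrix: apply `x ↦ x^s` to the nonzero eigenvalues,
with the convention that the eigenvalue `0` is sent to `0` (so `A^0` is the projection onto the
support of `A`); junk value `0` if `A` is not Hermitian. -/
def matPow (A : Matrix n n ℂ) (s : ℝ) : Matrix n n ℂ :=
  if h : A.IsHermitian then
    (h.eigenvectorUnitary : Matrix n n ℂ) *
      diagonal (fun i => ((if h.eigenvalues i = 0 then 0 else (h.eigenvalues i) ^ s : ℝ) : ℂ)) *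
      star (h.eigenvectorUnitary : Matrix n n ℂ)
  else 0

/-!
The suprema `l = sup (ρ₁ / ρ₂)` and `m = sup (ρ₂ / ρ₁)` are attained, so `ρ₁ ≤ l ρ₂` and
`ρ₂ ≤ m ρ₁`. Operator monotonicity of the square root gives `√ρ₁ ≤ √l √ρ₂`,
so `1 = tr ρ₁ ≤ √l tr (√ρ₁ √ρ₂)`, and symmetrically `1 ≤ √m tr (√ρ₁ √ρ₂)`. In the Nussbaum–Szkoła
representation `tr (ρ₁ ^ s ρ₂ ^ t) = ∑ᵢⱼ aᵢ ^ s bⱼ ^ t |⟨uᵢ, vⱼ⟩|²`, Cauchy–Schwarz gives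
`tr (√ρ₁ √ρ₂) ^ 2 ≤ tr (ρ₁ ^ s ρ₂ ^ (1 - s)) · tr (ρ₁ ^ (1 - s) ρ₂ ^ s)`, and the last factor is at
most `1` by weighted AM–GM, the overlaps being doubly stochastic. Hence
`tr (ρ₁ ^ s ρ₂ ^ (1 - s)) ≥ 1 / √(l m)` for every `s`, that is `ξ ≤ ln (l m) / 2`.
-/

open scoped MatrixOrder

def suppRpow (x s : ℝ) : ℝ := if x = 0 then 0 else x ^ s

lemma suppRpow_nonneg {x : ℝ} (hx : 0 ≤ x) (s : ℝ) : 0 ≤ suppRpow x s := by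
  unfold suppRpow
  split_ifs
  exacts [le_rfl, Real.rpow_nonneg hx s]

lemma suppRpow_mul_suppRpow {x : ℝ} (hx : 0 ≤ x) (s t : ℝ) :
    suppRpow x s * suppRpow x t = suppRpow x (s + t) := by
  unfold suppRpow
  split_ifs with h
  · simp
  · exact (Real.rpow_add (hx.lt_of_ne' h) s t).symm

lemma suppRpow_one (x : ℝ) : suppRpow x 1 = x := by
  unfold suppRpow
  split_ifs with h
  exacts [h.symm, Real.rpow_one x]

lemma suppRpow_mul_suppRpow_one_sub {x : ℝ} (hx : 0 ≤ x) (s : ℝ) :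
    suppRpow x s * suppRpow x (1 - s) = x := by
  rw [suppRpow_mul_suppRpow hx, add_sub_cancel, suppRpow_one]

lemma suppRpow_half (x : ℝ) : suppRpow x (1 / 2) = √x := by
  unfold suppRpow
  split_ifs with h
  · simp [h]
  · exact (Real.sqrt_eq_rpow x).symm

lemma suppRpow_mul_suppRpow_le {x y t : ℝ} (hx : 0 ≤ x) (hy : 0 ≤ y) (ht₀ : 0 ≤ t) (ht₁ : t ≤ 1) :
    suppRpow x t * suppRpow y (1 - t) ≤ t * x + (1 - t) * y := by
  have hrhs : 0 ≤ t * x + (1 - t) * y := by nlinarith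
  unfold suppRpow
  split_ifs
  iterate 3 simpa using hrhs
  exact Real.geom_mean_le_arith_mean2_weighted ht₀ (by linarith) hx hy (by ring)

lemma matPow_of_isHermitian {A : Matrix n n ℂ} (hA : A.IsHermitian) (s : ℝ) :
    matPow A s = (hA.eigenvectorUnitary : Matrix n n ℂ) *
      diagonal (fun i => ((suppRpow (hA.eigenvalues i) s : ℝ) : ℂ)) *
      star (hA.eigenvectorUnitary : Matrix n n ℂ) := by
  rw [matPow, dif_pos hA]
  rfl

lemma matPow_half {A : Matrix n n ℂ} (hA : A.PosSemidef) : matPow A (1 / 2) = CFC.sqrt A := by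
  rw [CFC.sqrt_eq_real_sqrt A hA.nonneg, cfcₙ_eq_cfc, hA.1.cfc_eq, IsHermitian.cfc,
    Unitary.conjStarAlgAut_apply, matPow_of_isHermitian hA.1]
  simp only [suppRpow_half]
  rfl

lemma Matrix.PosSemidef.trace_mul_nonneg {𝕜 : Type*} [RCLike 𝕜] {A B : Matrix n n 𝕜}
    (hA : A.PosSemidef) (hB : B.PosSemidef) : 0 ≤ (A * B).trace := by
  have h := hA.conjTranspose_mul_mul_same (CFC.sqrt B)
  rw [(CFC.sqrt_nonneg B).posSemidef.1.eq, mul_assoc] at h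
  rw [← CFC.sqrt_mul_sqrt_self B hB.nonneg, ← mul_assoc, trace_mul_comm]
  exact h.trace_nonneg

lemma Matrix.cfcSqrt_smul {𝕜 : Type*} [RCLike 𝕜] {A : Matrix n n 𝕜} (hA : A.PosSemidef) {c : ℝ}
    (hc : 0 ≤ c) : CFC.sqrt (c • A) = √c • CFC.sqrt A :=
  CFC.sqrt_unique
    (by rw [smul_mul_smul_comm, Real.mul_self_sqrt hc, CFC.sqrt_mul_sqrt_self A hA.nonneg])
    ((CFC.sqrt_nonneg A).posSemidef.smul (Real.sqrt_nonneg c)).nonneg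

lemma one_le_of_posSemidef_smul_sub {ι : Type*} [Fintype ι] {A B : Matrix ι ι ℂ}
    (tA : A.trace = 1) (tB : B.trace = 1) {l : ℝ} (hl : (l • B - A).PosSemidef) : 1 ≤ l := by
  have h := hl.trace_nonneg
  rw [trace_sub, trace_smul, tA, tB, Complex.real_smul, mul_one, sub_nonneg] at h
  exact_mod_cast h

lemma one_le_sqrt_mul_re_trace_sqrt_mul_sqrt {A B : Matrix n n ℂ} (hA : A.PosSemidef)
    (hB : B.PosSemidef) (tA : A.trace = 1) {l : ℝ} (hl₀ : 0 ≤ l) (hl : (l • B - A).PosSemidef) :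
    1 ≤ √l * (CFC.sqrt A * CFC.sqrt B).trace.re := by
  have hsqrt : CFC.sqrt A ≤ √l • CFC.sqrt B := by
    rw [← cfcSqrt_smul hB hl₀]
    -- operator monotonicity of `CFC.sqrt` needs the C⋆-algebra structure of the operator norm
    open scoped Matrix.Norms.L2Operator in exact CFC.sqrt_le_sqrt _ _ hl
  have h := (CFC.sqrt_nonneg A).posSemidef.trace_mul_nonneg (le_iff.1 hsqrt)
  rw [mul_sub, mul_smul_comm, CFC.sqrt_mul_sqrt_self A hA.nonneg, trace_sub, trace_smul, tA] at h
  simpa [sub_nonneg] using (Complex.nonneg_iff.1 h).1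

def eigenOverlap {A B : Matrix n n ℂ} (hA : A.IsHermitian) (hB : B.IsHermitian) (i j : n) : ℝ :=
  Complex.normSq ((star (hA.eigenvectorUnitary : Matrix n n ℂ) * hB.eigenvectorUnitary) i j)

section eigenOverlap

variable {A B : Matrix n n ℂ} (hA : A.IsHermitian) (hB : B.IsHermitian)

lemma eigenOverlap_nonneg (i j : n) : 0 ≤ eigenOverlap hA hB i j := Complex.normSq_nonneg _

lemma eigenOverlap_comm (i j : n) : eigenOverlap hB hA j i = eigenOverlap hA hB i j := by
  have h : (star (hB.eigenvectorUnitary : Matrix n n ℂ) * hA.eigenvectorUnitary) j i =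
      star ((star (hA.eigenvectorUnitary : Matrix n n ℂ) * hB.eigenvectorUnitary) i j) := by
    rw [← star_apply, star_mul, star_star]
  rw [eigenOverlap, eigenOverlap, h, Complex.star_def, Complex.normSq_conj]

lemma sum_eigenOverlap_right (i : n) : ∑ j, eigenOverlap hA hB i j = 1 := by
  let W : unitaryGroup n ℂ := star hA.eigenvectorUnitary * hB.eigenvectorUnitary
  have hW : ((W : Matrix n n ℂ) * star (W : Matrix n n ℂ)) i i = 1 := by
    rw [Unitary.mul_star_self_of_mem W.2, one_apply_eq]
  have hterm (j : n) :
      (W : Matrix n n ℂ) i j * star (W : Matrix n n ℂ) j i = eigenOverlap hA hB i j := by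
    rw [star_apply, Complex.star_def, Complex.mul_conj]
    rfl
  simp only [mul_apply, hterm] at hW
  exact_mod_cast hW

lemma sum_eigenOverlap_left (j : n) : ∑ i, eigenOverlap hA hB i j = 1 := by
  simp_rw [← eigenOverlap_comm hA hB]
  exact sum_eigenOverlap_right hB hA j

end eigenOverlap

def nussbaumSzkola {A B : Matrix n n ℂ} (hA : A.IsHermitian) (hB : B.IsHermitian) (s t : ℝ) : ℝ :=
  ∑ i, ∑ j, suppRpow (hA.eigenvalues i) s * suppRpow (hB.eigenvalues j) t * eigenOverlap hA hB i j

lemma trace_matPow_mul_matPow {A B : Matrix n n ℂ} (hA : A.IsHermitian) (hB : B.IsHermitian)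
    (s t : ℝ) : (matPow A s * matPow B t).trace = nussbaumSzkola hA hB s t := by
  set U := (hA.eigenvectorUnitary : Matrix n n ℂ)
  set V := (hB.eigenvectorUnitary : Matrix n n ℂ)
  set W := star U * V
  set Da := diagonal fun i => ((suppRpow (hA.eigenvalues i) s : ℝ) : ℂ)
  set Db := diagonal fun j => ((suppRpow (hB.eigenvalues j) t : ℝ) : ℂ)
  have hcycle : (matPow A s * matPow B t).trace = (Da * W * Db * star W).trace := by
    calc (matPow A s * matPow B t).trace = (U * (Da * star U * V * Db * star V)).trace := by
          simp only [matPow_of_isHermitian hA, matPow_of_isHermitian hB, mul_assoc]; rfl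
      _ = (Da * star U * V * Db * star V * U).trace := trace_mul_comm _ _
      _ = (Da * W * Db * star W).trace := by simp only [W, star_mul, star_star, mul_assoc]
  rw [hcycle, trace]
  push_cast [nussbaumSzkola, eigenOverlap]
  refine Finset.sum_congr rfl fun i _ => ?_
  rw [diag_apply, mul_apply]
  refine Finset.sum_congr rfl fun j _ => ?_
  rw [mul_diagonal, diagonal_mul, star_apply, Complex.star_def, ← Complex.mul_conj]
  ring

lemma sum_eigenvalues_eq_one {A : Matrix n n ℂ} (hA : A.IsHermitian) (tA : A.trace = 1) :
    ∑ i, hA.eigenvalues i = 1 := by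
  rw [hA.trace_eq_sum_eigenvalues] at tA
  simpa using congrArg Complex.re tA

section nussbaumSzkola

variable {A B : Matrix n n ℂ} (hA : A.PosSemidef) (hB : B.PosSemidef)

lemma nussbaumSzkola_nonneg (s t : ℝ) : 0 ≤ nussbaumSzkola hA.1 hB.1 s t :=
  Finset.sum_nonneg fun i _ => Finset.sum_nonneg fun j _ =>
    mul_nonneg (mul_nonneg (suppRpow_nonneg (hA.eigenvalues_nonneg i) s)
      (suppRpow_nonneg (hB.eigenvalues_nonneg j) t)) (eigenOverlap_nonneg hA.1 hB.1 i j)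

lemma nussbaumSzkola_le_one (tA : A.trace = 1) (tB : B.trace = 1) {t : ℝ} (ht₀ : 0 ≤ t)
    (ht₁ : t ≤ 1) : nussbaumSzkola hA.1 hB.1 t (1 - t) ≤ 1 := by
  set a := hA.1.eigenvalues
  set b := hB.1.eigenvalues
  set q := eigenOverlap hA.1 hB.1
  have ha : ∑ i, a i = 1 := sum_eigenvalues_eq_one hA.1 tA
  have hb : ∑ j, b j = 1 := sum_eigenvalues_eq_one hB.1 tB
  calc nussbaumSzkola hA.1 hB.1 t (1 - t)
      ≤ ∑ i, ∑ j, (t * (a i * q i j) + (1 - t) * (b j * q i j)) := by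
        refine Finset.sum_le_sum fun i _ => Finset.sum_le_sum fun j _ => ?_
        have := mul_le_mul_of_nonneg_right (suppRpow_mul_suppRpow_le
          (hA.eigenvalues_nonneg i) (hB.eigenvalues_nonneg j) ht₀ ht₁)
          (eigenOverlap_nonneg hA.1 hB.1 i j)
        linarith
    _ = t * ∑ i, a i * ∑ j, q i j + (1 - t) * ∑ j, b j * ∑ i, q i j := by
        simp only [Finset.sum_add_distrib, Finset.mul_sum]
        rw [Finset.sum_comm (f := fun i j => (1 - t) * (b j * q i j))]
    _ = 1 := by
        simp only [q, sum_eigenOverlap_right, sum_eigenOverlap_left, mul_one, ha, hb]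
        ring

lemma sq_nussbaumSzkola_half_le (s : ℝ) :
    nussbaumSzkola hA.1 hB.1 (1 / 2) (1 / 2) ^ 2 ≤
      nussbaumSzkola hA.1 hB.1 s (1 - s) * nussbaumSzkola hA.1 hB.1 (1 - s) s := by
  set a := hA.1.eigenvalues
  set b := hB.1.eigenvalues
  set q := eigenOverlap hA.1 hB.1
  have hterm (s t : ℝ) (i j : n) : 0 ≤ suppRpow (a i) s * suppRpow (b j) t * q i j :=
    mul_nonneg (mul_nonneg (suppRpow_nonneg (hA.eigenvalues_nonneg i) s)
      (suppRpow_nonneg (hB.eigenvalues_nonneg j) t)) (eigenOverlap_nonneg hA.1 hB.1 i j)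
  simp only [nussbaumSzkola, ← Fintype.sum_prod_type']
  refine Finset.sum_sq_le_sum_mul_sum_of_sq_le_mul _ (fun p _ => hterm _ _ _ _)
    (fun p _ => hterm _ _ _ _) (fun ⟨i, j⟩ _ => le_of_eq ?_)
  have ha (r : ℝ) : suppRpow (a i) r * suppRpow (a i) (1 - r) = a i :=
    suppRpow_mul_suppRpow_one_sub (hA.eigenvalues_nonneg i) r
  have hb (r : ℝ) : suppRpow (b j) r * suppRpow (b j) (1 - r) = b j :=
    suppRpow_mul_suppRpow_one_sub (hB.eigenvalues_nonneg j) r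
  have hhalf : (1 : ℝ) - 1 / 2 = 1 / 2 := by norm_num
  have ha' := ha (1 / 2)
  have hb' := hb (1 / 2)
  rw [hhalf] at ha' hb'
  calc (suppRpow (a i) (1 / 2) * suppRpow (b j) (1 / 2) * q i j) ^ 2
      = (suppRpow (a i) (1 / 2) * suppRpow (a i) (1 / 2)) *
          (suppRpow (b j) (1 / 2) * suppRpow (b j) (1 / 2)) * q i j ^ 2 := by ring
    _ = (suppRpow (a i) s * suppRpow (a i) (1 - s)) *
          (suppRpow (b j) (1 - s) * suppRpow (b j) (1 - (1 - s))) * q i j ^ 2 := by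
        rw [ha, hb, ha', hb']
    _ = _ := by rw [sub_sub_cancel]; ring

end nussbaumSzkola

lemma inv_sqrt_mul_le_nussbaumSzkola {A B : Matrix n n ℂ} (hA : A.PosSemidef) (hB : B.PosSemidef)
    (tA : A.trace = 1) (tB : B.trace = 1) {l m : ℝ} (hl : (l • B - A).PosSemidef)
    (hm : (m • A - B).PosSemidef) {s : ℝ} (hs₀ : 0 ≤ s) (hs₁ : s ≤ 1) :
    (√(l * m))⁻¹ ≤ nussbaumSzkola hA.1 hB.1 s (1 - s) := by
  set F := nussbaumSzkola hA.1 hB.1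
  have hl₁ := one_le_of_posSemidef_smul_sub tA tB hl
  have hm₁ := one_le_of_posSemidef_smul_sub tB tA hm
  have hF : (CFC.sqrt A * CFC.sqrt B).trace.re = F (1 / 2) (1 / 2) := by
    rw [← matPow_half hA, ← matPow_half hB, trace_matPow_mul_matPow hA.1 hB.1, Complex.ofReal_re]
  have hlF : 1 ≤ √l * F (1 / 2) (1 / 2) :=
    hF ▸ one_le_sqrt_mul_re_trace_sqrt_mul_sqrt hA hB tA (by linarith) hl
  have hmF : 1 ≤ √m * F (1 / 2) (1 / 2) := by
    rw [← hF, trace_mul_comm]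
    exact one_le_sqrt_mul_re_trace_sqrt_mul_sqrt hB hA tB (by linarith) hm
  have hhalf : (√(l * m))⁻¹ ≤ F (1 / 2) (1 / 2) ^ 2 := by
    rw [inv_le_iff_one_le_mul₀' (by positivity), Real.sqrt_mul (by linarith)]
    nlinarith
  have hcompl : F (1 - s) s ≤ 1 := by
    simpa only [sub_sub_cancel] using
      nussbaumSzkola_le_one hA hB tA tB (t := 1 - s) (by linarith) (by linarith)
  calc (√(l * m))⁻¹ ≤ F (1 / 2) (1 / 2) ^ 2 := hhalf
    _ ≤ F s (1 - s) * F (1 - s) s := sq_nussbaumSzkola_half_le hA hB s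
    _ ≤ F s (1 - s) := mul_le_of_le_one_right (nussbaumSzkola_nonneg hA hB _ _) hcompl

lemma exists_msupRatio_eq_coe {A B : Matrix n n ℂ} (tA : A.trace = 1) (tB : B.trace = 1)
    (h : msupRatio A B ≠ ⊤) : ∃ l : ℝ, 1 ≤ l ∧ (l • B - A).PosSemidef ∧ msupRatio A B = l := by
  rw [msupRatio] at h ⊢
  set S := {l : ℝ | (l • B - A).PosSemidef}
  have hne : S.Nonempty := by
    by_contra hS
    rw [Set.not_nonempty_iff_eq_empty.1 hS, Set.image_empty, sInf_empty] at h
    exact h rfl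
  have hbdd : ∀ l ∈ S, 1 ≤ l := fun l hl => one_le_of_posSemidef_smul_sub tA tB hl
  have hclosed : IsClosed S := by
    show IsClosed {l : ℝ | A ≤ l • B}
    open scoped Matrix.Norms.L2Operator in
    exact isClosed_le continuous_const (continuous_id.smul continuous_const)
  have hleast := hclosed.isLeast_csInf hne ⟨1, hbdd⟩
  exact ⟨sInf S, hbdd _ hleast.1, hleast.1,
    (EReal.coe_strictMono.monotone.map_isLeast hleast).csInf_eq⟩

/-- **Chernoff bound vs. Hilbert distance.** -/
theorem chernoff_bound_vs_hilbert_distance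
    {d : ℕ} (ρ₁ ρ₂ : Matrix (Fin d) (Fin d) ℂ)
    (h₁ : ρ₁.PosSemidef) (h₂ : ρ₂.PosSemidef)
    (t₁ : ρ₁.trace = 1) (t₂ : ρ₂.trace = 1)
    (ξ : ℝ)
    (hξ : ξ = - Real.log (sInf {x : ℝ | ∃ s ∈ Set.Icc (0 : ℝ) 1,
      x = ((matPow ρ₁ s * matPow ρ₂ (1 - s)).trace).re})) :
    ((ξ : ℝ) : EReal) ≤ mHilbert ρ₁ ρ₂ / 2 := by
  by_cases htop : msupRatio ρ₁ ρ₂ = ⊤ ∨ msupRatio ρ₂ ρ₁ = ⊤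
  · rw [mHilbert, if_pos htop,
      EReal.top_div_of_pos_ne_top (by norm_num) (by exact_mod_cast EReal.natCast_ne_top 2)]
    exact le_top
  obtain ⟨l, hl₁, hl, hl_eq⟩ := exists_msupRatio_eq_coe t₁ t₂ (not_or.1 htop).1
  obtain ⟨m, hm₁, hm, hm_eq⟩ := exists_msupRatio_eq_coe t₂ t₁ (not_or.1 htop).2
  have hlm : 0 < l * m := by positivity
  have hinf : (√(l * m))⁻¹ ≤ sInf {x : ℝ | ∃ s ∈ Set.Icc (0 : ℝ) 1,
      x = ((matPow ρ₁ s * matPow ρ₂ (1 - s)).trace).re} := by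
    refine le_csInf ⟨_, 0, ⟨le_rfl, zero_le_one⟩, rfl⟩ ?_
    rintro x ⟨s, ⟨hs₀, hs₁⟩, rfl⟩
    rw [trace_matPow_mul_matPow h₁.1 h₂.1, Complex.ofReal_re]
    exact inv_sqrt_mul_le_nussbaumSzkola h₁ h₂ t₁ t₂ hl hm hs₀ hs₁
  have hξ_le : ξ ≤ Real.log (l * m) / 2 := by
    rw [hξ, ← Real.log_sqrt hlm.le, ← neg_le_neg_iff, neg_neg, ← Real.log_inv]
    exact Real.log_le_log (by positivity) hinf
  rw [mHilbert, if_neg htop, hl_eq, hm_eq, EReal.toReal_coe, EReal.toReal_coe]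
  exact EReal.coe_le_coe_iff.2 hξ_le

end
end
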